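/- The secant cone of the cusp: for X = {(t², t³) : t ∈ ℂ} ⊆ ℂ², the relative tangent cone C₀(X, X) equals all of ℂ². -/

import Mathlib

open Filter Topology

/-- The relative tangent cone `C₀(X,Y)` of two subsets of `ℂⁿ` at the origin:
vectors `v` for which there are sequences `xᵥ ∈ X`, `yᵥ ∈ Y`, `λᵥ ∈ ℂ` with
`xᵥ → 0`, `yᵥ → 0` and `λᵥ • (yᵥ - xᵥ) → v`. -/
def relTangentCone {n : ℕ} (X Y : Set (Fin n → ℂ)) : Set (Fin n → ℂ) :=
  {v | ∃ x y : ℕ → (Fin n → ℂ), ∃ lam : ℕ → ℂ,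
    (∀ ν, x ν ∈ X) ∧ (∀ ν, y ν ∈ Y) ∧
    Tendsto x atTop (𝓝 0) ∧ Tendsto y atTop (𝓝 0) ∧
    Tendsto (fun ν => lam ν • (y ν - x ν)) atTop (𝓝 v)}

/-- The ordinary tangent cone `C₀(X)` at the origin. -/
def tangentCone0 {n : ℕ} (X : Set (Fin n → ℂ)) : Set (Fin n → ℂ) :=
  {v | ∃ x : ℕ → (Fin n → ℂ), ∃ lam : ℕ → ℂ, (∀ ν, x ν ∈ X) ∧
    Tendsto x atTop (𝓝 0) ∧ Tendsto (fun ν => lam ν • x ν) atTop (𝓝 v)}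

/-- The vanishing order at `0` of a map `ℂ → E`: the least `m` with nonvanishing
`m`-th derivative at `0` (for holomorphic maps this is the usual order). -/
noncomputable def holOrder {E : Type*} [NormedAddCommGroup E] [NormedSpace ℂ E]
    (Φ : ℂ → E) : ℕ :=
  sInf {m : ℕ | iteratedDeriv m Φ 0 ≠ 0}

/- The secant of the cusp through the points with parameters `s, t = e (a e / 2 ∓ w)` has
direction `(t + s, t² + t s + s²) ∝ (a, 3 a² e² / 4 + w²)`: the sum `t + s` is of order `e²`
while `t - s` is of order `e`, so both coordinates are of order `e²`. Taking `w = σ + e` with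
`σ² = b` (rather than `w = σ`, which could make `t = s`) and letting `e → 0` yields every
direction `(a, b)`; the square root absorbs both the tangent direction `(1, 0)` and the
vertical one `(0, 1)`, so no case distinction is needed. -/

theorem mem_relTangentCone_of_tendsto {n : ℕ} {X Y : Set (Fin n → ℂ)} {α : Type*}
    {l : Filter α} [l.NeBot] [l.IsCountablyGenerated] {x y : α → Fin n → ℂ} {lam : α → ℂ}
    {v : Fin n → ℂ} (hxX : ∀ a, x a ∈ X) (hyY : ∀ a, y a ∈ Y)
    (hx : Tendsto x l (𝓝 0)) (hy : Tendsto y l (𝓝 0))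
    (hv : Tendsto (fun a => lam a • (y a - x a)) l (𝓝 v)) :
    v ∈ relTangentCone X Y := by
  obtain ⟨u, hu⟩ := exists_seq_tendsto l
  exact ⟨x ∘ u, y ∘ u, lam ∘ u, fun ν => hxX (u ν), fun ν => hyY (u ν),
    hx.comp hu, hy.comp hu, hv.comp hu⟩

theorem tendsto_cusp {α : Type*} {l : Filter α} {r : α → ℂ} (hr : Tendsto r l (𝓝 0)) :
    Tendsto (fun a => ![r a ^ 2, r a ^ 3]) l (𝓝 0) := by
  rw [tendsto_pi_nhds]
  intro i
  fin_cases i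
  · simpa using hr.pow 2
  · simpa using hr.pow 3

theorem cusp_secant_eq (a w e : ℂ) (he : e ≠ 0) (hw : w ≠ 0) :
    (2 * e ^ 3 * w)⁻¹ •
        (![(e * (a * e / 2 + w)) ^ 2, (e * (a * e / 2 + w)) ^ 3] -
          ![(e * (a * e / 2 - w)) ^ 2, (e * (a * e / 2 - w)) ^ 3]) =
      ![a, 3 * a ^ 2 * e ^ 2 / 4 + w ^ 2] := by
  ext i
  fin_cases i <;> simp <;> field_simp <;> ring

theorem eventually_ne_nhdsNE {X : Type*} [TopologicalSpace X] [T1Space X] (a b : X) :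
    ∀ᶠ x in 𝓝[≠] a, x ≠ b :=
  nhdsNE_le_cofinite a (eventually_cofinite_ne b)

theorem stmt18 :
    relTangentCone
      {v : Fin 2 → ℂ | ∃ t : ℂ, v = ![t ^ 2, t ^ 3]}
      {v : Fin 2 → ℂ | ∃ t : ℂ, v = ![t ^ 2, t ^ 3]}
    = Set.univ := by
  refine Set.eq_univ_of_forall fun v => ?_
  obtain ⟨σ, hσ⟩ := IsAlgClosed.exists_pow_nat_eq (v 1) two_pos
  set s : ℂ → ℂ := fun e => e * (v 0 * e / 2 - (σ + e))
  set t : ℂ → ℂ := fun e => e * (v 0 * e / 2 + (σ + e))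
  have hs : Tendsto s (𝓝[≠] 0) (𝓝 0) :=
    tendsto_nhdsWithin_of_tendsto_nhds ((by fun_prop : Continuous s).tendsto' 0 0 (by simp [s]))
  have ht : Tendsto t (𝓝[≠] 0) (𝓝 0) :=
    tendsto_nhdsWithin_of_tendsto_nhds ((by fun_prop : Continuous t).tendsto' 0 0 (by simp [t]))
  refine mem_relTangentCone_of_tendsto (lam := fun e => (2 * e ^ 3 * (σ + e))⁻¹)
    (fun e => ⟨s e, rfl⟩) (fun e => ⟨t e, rfl⟩) (tendsto_cusp hs) (tendsto_cusp ht) ?_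
  have hsecant : (fun e => ![v 0, 3 * v 0 ^ 2 * e ^ 2 / 4 + (σ + e) ^ 2]) =ᶠ[𝓝[≠] 0]
      fun e => (2 * e ^ 3 * (σ + e))⁻¹ • (![t e ^ 2, t e ^ 3] - ![s e ^ 2, s e ^ 3]) := by
    filter_upwards [self_mem_nhdsWithin, eventually_ne_nhdsNE 0 (-σ)] with e he hσe
    exact (cusp_secant_eq _ _ _ he (by contrapose! hσe; linear_combination hσe)).symm
  refine Tendsto.congr' hsecant (tendsto_nhdsWithin_of_tendsto_nhds ?_)
  convert (show Continuous fun e : ℂ => ![v 0, 3 * v 0 ^ 2 * e ^ 2 / 4 + (σ + e) ^ 2] by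
    fun_prop).tendsto 0 using 2
  ext i
  fin_cases i <;> simp [hσ]
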